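/- A symmetric real tensor A of order m and dimension n is strictly semi-positive if and only if it is strictly copositive. -/

import Mathlib

open Finset

/-- `(A x^{m-1})_i`: contraction of an order-`(m+1)` tensor with `m` copies of `x`. -/
def tcontr {m : ℕ} {ι : Type*} [Fintype ι] [DecidableEq ι]
    (A : (Fin (m + 1) → ι) → ℝ) (x : ι → ℝ) (i : ι) : ℝ :=
  ∑ g : Fin m → ι, A (Fin.cons i g) * ∏ t, x (g t)

/-- `A x^{m}` : the homogeneous form of an order-`(m+1)` tensor. -/
def tform {m : ℕ} {ι : Type*} [Fintype ι] [DecidableEq ι]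
    (A : (Fin (m + 1) → ι) → ℝ) (x : ι → ℝ) : ℝ :=
  ∑ f : Fin (m + 1) → ι, A f * ∏ t, x (f t)

def SemiPos {m : ℕ} {ι : Type*} [Fintype ι] [DecidableEq ι]
    (A : (Fin (m + 1) → ι) → ℝ) : Prop :=
  ∀ x : ι → ℝ, 0 ≤ x → x ≠ 0 → ∃ k, 0 < x k ∧ 0 ≤ tcontr A x k

def StrictSemiPos {m : ℕ} {ι : Type*} [Fintype ι] [DecidableEq ι]
    (A : (Fin (m + 1) → ι) → ℝ) : Prop :=
  ∀ x : ι → ℝ, 0 ≤ x → x ≠ 0 → ∃ k, 0 < x k ∧ 0 < tcontr A x k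

def Copos {m : ℕ} {ι : Type*} [Fintype ι] [DecidableEq ι]
    (A : (Fin (m + 1) → ι) → ℝ) : Prop :=
  ∀ x : ι → ℝ, 0 ≤ x → 0 ≤ tform A x

def StrictCopos {m : ℕ} {ι : Type*} [Fintype ι] [DecidableEq ι]
    (A : (Fin (m + 1) → ι) → ℝ) : Prop :=
  ∀ x : ι → ℝ, 0 ≤ x → x ≠ 0 → 0 < tform A x

/-- Symmetric tensor: entries invariant under any permutation of indices. -/
def SymT {m : ℕ} {ι : Type*} (A : (Fin (m + 1) → ι) → ℝ) : Prop :=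
  ∀ (f : Fin (m + 1) → ι) (σ : Equiv.Perm (Fin (m + 1))), A (f ∘ σ) = A f

/-- `x` solves the tensor complementarity problem TCP(q, A). -/
def TCPsol {m n : ℕ} (A : (Fin (m + 1) → Fin n) → ℝ) (q x : Fin n → ℝ) : Prop :=
  0 ≤ x ∧ (∀ i, 0 ≤ q i + tcontr A x i) ∧ (∑ i, x i * (q i + tcontr A x i)) = 0

/-- The principal sub-tensor of `A` with all indices in `N`. -/
def subT {m n : ℕ} (A : (Fin (m + 1) → Fin n) → ℝ) (N : Finset (Fin n)) :
    (Fin (m + 1) → {i // i ∈ N}) → ℝ :=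
  fun f => A fun t => (f t : Fin n)

/-! Strict copositivity gives strict semi-positivity through Euler's identity
`A x^m = ∑ i, x i * (A x^{m-1})_i`. Conversely, if `A x^m ≤ 0` for some nonzero `x ≥ 0`,
let `y` minimize `A x^m` on the standard simplex, so that `A y^m ≤ 0`. For `y k > 0` the line
`t ↦ y + t • (e_k - y)` stays in the simplex for small `t` of either sign, and for symmetric `A`
its derivative at `0` is `(m + 1) ((A y^{m-1})_k - A y^m)`. Hence `(A y^{m-1})_k = A y^m ≤ 0`
on the whole support of `y`, which strict semi-positivity forbids. -/

theorem Fin.prod_erase_eq_prod_succAbove {M : Type*} [CommMonoid M] {n : ℕ}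
    (h : Fin (n + 1) → M) (s : Fin (n + 1)) :
    ∏ j ∈ univ.erase s, h j = ∏ t, h (s.succAbove t) := by
  rw [← Finset.prod_image (s.succAbove_right_injective.injOn)]
  congr 1
  ext j
  simp [eq_comm]

theorem Fin.sum_univ_fun_insertNth {M ι : Type*} [AddCommMonoid M] [Fintype ι] {m : ℕ}
    (s : Fin (m + 1)) (F : (Fin (m + 1) → ι) → M) :
    ∑ f, F f = ∑ i, ∑ g : Fin m → ι, F (s.insertNth i g) := by
  rw [← Fintype.sum_prod_type']
  exact (Fintype.sum_equiv (Fin.insertNthEquiv (fun _ => ι) s) _ _ fun _ => rfl).symm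

theorem SymT.apply_insertNth {m : ℕ} {ι : Type*} {A : (Fin (m + 1) → ι) → ℝ} (hA : SymT A)
    (s : Fin (m + 1)) (i : ι) (g : Fin m → ι) : A (s.insertNth i g) = A (Fin.cons i g) := by
  rw [← Fin.insertNth_comp_cycleRange_symm s i g, hA]

theorem inv_sum_smul_mem_stdSimplex {ι : Type*} [Fintype ι] {x : ι → ℝ} (hx : 0 ≤ x)
    (hx0 : x ≠ 0) : (∑ i, x i)⁻¹ • x ∈ stdSimplex ℝ ι := by
  have hpos : 0 < ∑ i, x i := by
    obtain ⟨j, hj⟩ := Function.ne_iff.mp hx0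
    exact sum_pos' (fun i _ => hx i) ⟨j, mem_univ j, (hx j).lt_of_ne' hj⟩
  refine ⟨fun i => mul_nonneg (inv_nonneg.mpr hpos.le) (hx i), ?_⟩
  simp [← mul_sum, hpos.ne']

variable {m : ℕ} {ι : Type*} [Fintype ι] [DecidableEq ι]

theorem tform_eq_sum_mul_tcontr (A : (Fin (m + 1) → ι) → ℝ) (x : ι → ℝ) :
    tform A x = ∑ i, x i * tcontr A x i := by
  rw [tform, Fin.sum_univ_fun_insertNth 0]
  refine sum_congr rfl fun i _ => ?_
  rw [tcontr, mul_sum]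
  refine sum_congr rfl fun g _ => ?_
  simp only [Fin.insertNth_zero', Fin.prod_univ_succ, Fin.cons_zero, Fin.cons_succ]
  ring

theorem SymT.sum_mul_prod_succAbove {A : (Fin (m + 1) → ι) → ℝ} (hA : SymT A)
    (y v : ι → ℝ) (s : Fin (m + 1)) :
    ∑ f, A f * ((∏ t, y (f (s.succAbove t))) * v (f s)) = ∑ i, v i * tcontr A y i := by
  rw [Fin.sum_univ_fun_insertNth s]
  refine sum_congr rfl fun i _ => ?_
  rw [tcontr, mul_sum]
  refine sum_congr rfl fun g _ => ?_
  simp only [hA.apply_insertNth, Fin.insertNth_apply_same, Fin.insertNth_apply_succAbove]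
  ring

theorem SymT.hasDerivAt_tform_add_smul {A : (Fin (m + 1) → ι) → ℝ} (hA : SymT A)
    (y v : ι → ℝ) :
    HasDerivAt (fun t : ℝ => tform A (y + t • v)) ((m + 1) * ∑ i, v i * tcontr A y i) 0 := by
  have hprod (f : Fin (m + 1) → ι) :
      HasDerivAt (fun t : ℝ => ∏ s, (y + t • v) (f s))
        (∑ s, (∏ t, y (f (s.succAbove t))) * v (f s)) 0 := by
    have := HasDerivAt.fun_finsetProd (u := univ) (x := (0 : ℝ))
      fun s _ => ((hasDerivAt_id (0 : ℝ)).smul_const (v (f s))).const_add (y (f s))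
    simpa [Fin.prod_erase_eq_prod_succAbove] using this
  refine (HasDerivAt.fun_sum (u := univ) fun f _ => (hprod f).const_mul (A f)).congr_deriv ?_
  calc ∑ f, A f * ∑ s, (∏ t, y (f (s.succAbove t))) * v (f s)
      = ∑ s : Fin (m + 1), ∑ f, A f * ((∏ t, y (f (s.succAbove t))) * v (f s)) := by
        simp only [mul_sum]
        exact sum_comm
    _ = (m + 1) * ∑ i, v i * tcontr A y i := by
        simp [hA.sum_mul_prod_succAbove]

theorem tform_smul (A : (Fin (m + 1) → ι) → ℝ) (c : ℝ) (x : ι → ℝ) :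
    tform A (c • x) = c ^ (m + 1) * tform A x := by
  simp only [tform, mul_sum, Pi.smul_apply, smul_eq_mul, prod_mul_distrib, prod_const, card_univ,
    Fintype.card_fin]
  exact sum_congr rfl fun _ _ => by ring

theorem continuous_tform (A : (Fin (m + 1) → ι) → ℝ) : Continuous (tform A) := by
  unfold tform
  fun_prop

theorem add_smul_single_sub_mem_stdSimplex {y : ι → ℝ} (hy : y ∈ stdSimplex ℝ ι) (k : ι)
    {t : ℝ} (ht : t ∈ Set.Icc (-y k) 1) :
    y + t • (Pi.single k 1 - y) ∈ stdSimplex ℝ ι := by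
  obtain ⟨hy0, hy1⟩ := hy
  obtain ⟨htl, htu⟩ := ht
  refine ⟨fun i => ?_, ?_⟩
  · have hyk1 : y k ≤ 1 := hy1 ▸ single_le_sum (fun i _ => hy0 i) (mem_univ k)
    rcases eq_or_ne i k with rfl | hik
    · simp only [Pi.add_apply, Pi.smul_apply, Pi.sub_apply, Pi.single_eq_same, smul_eq_mul]
      rcases le_total 0 t with h | h <;> nlinarith [hy0 i]
    · simp only [Pi.add_apply, Pi.smul_apply, Pi.sub_apply, Pi.single_eq_of_ne hik, smul_eq_mul]
      nlinarith [hy0 i]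
  · simp [sum_add_distrib, ← mul_sum, sum_sub_distrib, hy1]

theorem SymT.tcontr_eq_tform_of_isMinOn {A : (Fin (m + 1) → ι) → ℝ} (hA : SymT A)
    {y : ι → ℝ} (hy : y ∈ stdSimplex ℝ ι) (hmin : IsMinOn (tform A) (stdSimplex ℝ ι) y)
    {k : ι} (hk : 0 < y k) : tcontr A y k = tform A y := by
  set v : ι → ℝ := Pi.single k 1 - y
  have hloc : IsLocalMin (fun t : ℝ => tform A (y + t • v)) 0 := by
    filter_upwards [Icc_mem_nhds (neg_lt_zero.mpr hk) one_pos] with t ht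
    simpa using hmin (add_smul_single_sub_mem_stdSimplex hy k ht)
  have hderiv : ((m : ℝ) + 1) * ∑ i, v i * tcontr A y i = 0 :=
    hloc.hasDerivAt_eq_zero (hA.hasDerivAt_tform_add_smul y v)
  have hsum : ∑ i, v i * tcontr A y i = tcontr A y k - tform A y := by
    simp [v, sub_mul, sum_sub_distrib, Pi.single_apply, tform_eq_sum_mul_tcontr]
  have : ((m : ℝ) + 1) ≠ 0 := by positivity
  linarith [(mul_eq_zero.mp hderiv).resolve_left this]

theorem StrictCopos.strictSemiPos {A : (Fin (m + 1) → ι) → ℝ} (hA : StrictCopos A) :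
    StrictSemiPos A := by
  intro x hx hx0
  by_contra! hle
  have hterm (i : ι) : x i * tcontr A x i ≤ 0 := by
    rcases (hx i).eq_or_lt with h | h
    · simp [← h]
    · exact mul_nonpos_of_nonneg_of_nonpos h.le (hle i h)
  have := hA x hx hx0
  rw [tform_eq_sum_mul_tcontr] at this
  linarith [sum_nonpos fun i (_ : i ∈ univ) => hterm i]

theorem SymT.strictCopos_of_strictSemiPos {A : (Fin (m + 1) → ι) → ℝ} (hA : SymT A)
    (hS : StrictSemiPos A) : StrictCopos A := by
  intro x hx hx0
  by_contra! hle
  obtain ⟨y, hy, hmin⟩ := (isCompact_stdSimplex ℝ ι).exists_isMinOn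
    ⟨_, inv_sum_smul_mem_stdSimplex hx hx0⟩ (continuous_tform A).continuousOn
  have hy_nonpos : tform A y ≤ 0 := calc
    tform A y ≤ tform A ((∑ i, x i)⁻¹ • x) := hmin (inv_sum_smul_mem_stdSimplex hx hx0)
    _ = (∑ i, x i)⁻¹ ^ (m + 1) * tform A x := tform_smul A _ x
    _ ≤ 0 := mul_nonpos_of_nonneg_of_nonpos
      (pow_nonneg (inv_nonneg.mpr (sum_nonneg fun i _ => hx i)) _) hle
  have hy0 : y ≠ 0 := by
    rintro rfl
    simpa using hy.2
  obtain ⟨k, hk, hpos⟩ := hS y hy.1 hy0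
  linarith [hA.tcontr_eq_tform_of_isMinOn hy hmin hk]

theorem stmt_14 {m n : ℕ} (A : (Fin (m + 1) → Fin n) → ℝ) (hA : SymT A) :
    StrictSemiPos A ↔ StrictCopos A :=
  ⟨hA.strictCopos_of_strictSemiPos, StrictCopos.strictSemiPos⟩
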